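/- Let ϖ be a periodic cell, Π the associated periodic domain, and a ∈ L^∞(Π) a periodic symbol. There exist constants C, C' > 0 such that for all η, μ ∈ [−π,π]: ‖P_η − P_μ‖_{L²(ϖ)→L²(ϖ)} ≤ C|η − μ|^{1/2}, and consequently ‖T_{a,η} − T_{a,μ}‖_{A²(ϖ)→A²(ϖ)} ≤ C'|η − μ|^{1/2}, where here T_{a,η} is regarded as the operator f ↦ P_η(a|_ϖ f) on A²(ϖ). -/

import Mathlib

open Complex MeasureTheory Filter Topology

noncomputable section

namespace BergmanToeplitz

/-- The `L²` space of a subset `Ω ⊆ ℂ` with respect to planar Lebesgue (area) measure. -/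
abbrev L2 (Ω : Set ℂ) := Lp ℂ 2 (volume.restrict Ω)

/-- The subspace of `L²(Ω)` of (a.e.-classes of) functions admitting an analytic
(holomorphic) representative on `Ω`. -/
def bergmanPre (Ω : Set ℂ) : Submodule ℂ (L2 Ω) where
  carrier := {f | ∃ g : ℂ → ℂ, DifferentiableOn ℂ g Ω ∧ (f : ℂ → ℂ) =ᵐ[volume.restrict Ω] g}
  add_mem' := by
    rintro f₁ f₂ ⟨g₁, hg₁, he₁⟩ ⟨g₂, hg₂, he₂⟩
    refine ⟨g₁ + g₂, hg₁.add hg₂, (Lp.coeFn_add f₁ f₂).trans ?_⟩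
    filter_upwards [he₁, he₂] with z h₁ h₂
    simp [h₁, h₂]
  zero_mem' := ⟨0, differentiableOn_const 0, by
    simpa using Lp.coeFn_zero ℂ 2 (volume.restrict _)⟩
  smul_mem' := by
    rintro c f ⟨g, hg, he⟩
    refine ⟨c • g, hg.const_smul c, (Lp.coeFn_smul c f).trans ?_⟩
    filter_upwards [he] with z h
    simp [h]

/-- The Bergman space `A²(Ω)` of a domain `Ω ⊆ ℂ`, as a closed subspace of `L²(Ω)`.
For an open set `Ω` the subspace `bergmanPre Ω` is already closed in `L²(Ω)`,
so taking the topological closure does not change it. -/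
def Bergman (Ω : Set ℂ) : Submodule ℂ (L2 Ω) := (bergmanPre Ω).topologicalClosure

instance (Ω : Set ℂ) : CompleteSpace (Bergman Ω) :=
  (Submodule.isClosed_topologicalClosure _).completeSpace_coe

/-- Multiplication by an essentially bounded symbol, as a bounded operator on `L²`. -/
def mulOp {μ : Measure ℂ} (a : ℂ → ℂ) (ha : MemLp a ⊤ μ) : Lp ℂ 2 μ →L[ℂ] Lp ℂ 2 μ :=
  LinearMap.mkContinuous
    { toFun := fun f => (((Lp.memLp f).smul ha).toLp (a • (f : ℂ → ℂ)))
      map_add' := by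
        intro f g
        rw [← MemLp.toLp_add]
        exact (MemLp.toLp_eq_toLp_iff ((Lp.memLp (f + g)).smul ha) _).2 <|
          ((EventuallyEq.refl _ a).smul (Lp.coeFn_add f g)).trans
            (EventuallyEq.of_eq (by funext z; simp [Pi.smul_apply', mul_add]))
      map_smul' := by
        intro c f
        rw [RingHom.id_apply, ← MemLp.toLp_const_smul]
        exact (MemLp.toLp_eq_toLp_iff ((Lp.memLp (c • f)).smul ha) _).2 <|
          ((EventuallyEq.refl _ a).smul (Lp.coeFn_smul c f)).trans
            (EventuallyEq.of_eq (by
              funext z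
              simp only [Pi.smul_apply', Pi.smul_apply, smul_eq_mul, Pi.mul_apply]
              ring)) }
    (ENNReal.toReal (eLpNorm a ⊤ μ))
    (by
      intro f
      simp only [LinearMap.coe_mk, AddHom.coe_mk]
      rw [Lp.norm_toLp, Lp.norm_def]
      rw [← ENNReal.toReal_mul]
      refine ENNReal.toReal_mono (ENNReal.mul_ne_top ha.2.ne (Lp.memLp f).2.ne) ?_
      exact eLpNorm_smul_le_eLpNorm_top_mul_eLpNorm 2 (Lp.aestronglyMeasurable f) a)

/-- The Toeplitz operator `T_a : A²(Ω) → A²(Ω)` with bounded symbol `a`,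
`T_a f = P_Ω (a f)`, where `P_Ω` is the Bergman (orthogonal) projection. -/
def toeplitz (Ω : Set ℂ) (a : ℂ → ℂ) (ha : MemLp a ⊤ (volume.restrict Ω)) :
    ↥(Bergman Ω) →L[ℂ] ↥(Bergman Ω) :=
  (Bergman Ω).orthogonalProjectionOnto.comp ((mulOp a ha).comp (Bergman Ω).subtypeL)

/-- A bounded operator is Fredholm if its kernel is finite dimensional, its range is closed,
and its range has finite codimension. -/
def IsFredholm {H : Type*} [NormedAddCommGroup H] [NormedSpace ℂ H] (T : H →L[ℂ] H) : Prop :=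
  FiniteDimensional ℂ (LinearMap.ker (T : H →ₗ[ℂ] H)) ∧ IsClosed ((LinearMap.range (T : H →ₗ[ℂ] H) : Submodule ℂ H) : Set H) ∧
    FiniteDimensional ℂ (H ⧸ (LinearMap.range (T : H →ₗ[ℂ] H) : Submodule ℂ H))

/-- The essential spectrum of a bounded operator: the set of `z ∈ ℂ` such that `T - z·I`
is not Fredholm. -/
def essSpectrum {H : Type*} [NormedAddCommGroup H] [NormedSpace ℂ H] (T : H →L[ℂ] H) : Set ℂ :=
  {z | ¬ IsFredholm (T - z • (1 : H →L[ℂ] H))}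



/-- A periodic cell: a bounded Lipschitz domain contained in the strip
`(-1/2,1/2) × (-M,M)`, whose boundary meets the vertical lines `Re z = ±1/2`
exactly in the segments `{±1/2} × [a,b]`. -/
structure PeriodicCell where
  carrier : Set ℂ
  isOpen : IsOpen carrier
  isConnected : IsConnected carrier
  M : ℝ
  M_pos : 0 < M
  subset_strip : carrier ⊆ {z : ℂ | z.re ∈ Set.Ioo (-(1/2) : ℝ) (1/2) ∧ z.im ∈ Set.Ioo (-M) M}
  a : ℝ
  b : ℝ
  a_lt_b : a < b
  lipschitz_boundary : ∃ (K : NNReal) (γ : ℝ → ℂ), LipschitzWith K γ ∧ Function.Periodic γ 1 ∧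
    Set.InjOn γ (Set.Ico 0 1) ∧ Set.range γ = frontier carrier
  boundary_right : frontier carrier ∩ {z : ℂ | z.re = 1/2}
      = {z : ℂ | z.re = 1/2 ∧ z.im ∈ Set.Icc a b}
  boundary_left : frontier carrier ∩ {z : ℂ | z.re = -(1/2)}
      = {z : ℂ | z.re = -(1/2) ∧ z.im ∈ Set.Icc a b}

/-- The periodic domain `Π`: the interior of the union of the closures of the
integer translates of the periodic cell. -/
def PeriodicCell.domain (P : PeriodicCell) : Set ℂ :=
  interior (⋃ m : ℤ, closure ((fun z => z + (m : ℂ)) '' P.carrier))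

lemma PeriodicCell.isOpen_domain (P : PeriodicCell) : IsOpen P.domain := isOpen_interior

lemma PeriodicCell.cell_subset_domain (P : PeriodicCell) : P.carrier ⊆ P.domain :=
  interior_maximal
    (fun z hz => Set.mem_iUnion.2 ⟨0, subset_closure ⟨z, hz, by simp⟩⟩) P.isOpen

/-- A symbol `a ∈ L^∞(Π)` is periodic if `a(z) = a(z+1)` for a.e. `z ∈ Π`. -/
def PeriodicSymbol (P : PeriodicCell) (a : ℂ → ℂ) : Prop :=
  ∀ᵐ z ∂(volume.restrict P.domain), a z = a (z + 1)



/-- The subspace `A²_{η,ext}` of `L²(Ω)` of functions extending analytically to a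
neighbourhood `U` (inside the periodic domain `Π`) of `closure Ω ∩ Π`, satisfying the
quasiperiodic boundary condition `g(1/2 + iy) = e^{iη} g(-1/2 + iy)` for `y ∈ (c,d)`. -/
def quasiPre (Ω Pdom : Set ℂ) (hPdom : IsOpen Pdom) (c d η : ℝ) : Submodule ℂ (L2 Ω) where
  carrier := {f | ∃ (U : Set ℂ) (g : ℂ → ℂ), IsOpen U ∧ U ⊆ Pdom ∧ closure Ω ∩ Pdom ⊆ U ∧
    DifferentiableOn ℂ g U ∧ (f : ℂ → ℂ) =ᵐ[volume.restrict Ω] g ∧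
    ∀ y ∈ Set.Ioo c d, g (1/2 + y * I) = Complex.exp (η * I) * g (-(1/2) + y * I)}
  add_mem' := by
    rintro f₁ f₂ ⟨U₁, g₁, hU₁, hU₁P, hsub₁, hg₁, he₁, hbc₁⟩
      ⟨U₂, g₂, hU₂, hU₂P, hsub₂, hg₂, he₂, hbc₂⟩
    refine ⟨U₁ ∩ U₂, g₁ + g₂, hU₁.inter hU₂, Set.inter_subset_left.trans hU₁P,
      Set.subset_inter hsub₁ hsub₂,
      (hg₁.mono Set.inter_subset_left).add (hg₂.mono Set.inter_subset_right),
      (Lp.coeFn_add f₁ f₂).trans ?_, ?_⟩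
    · filter_upwards [he₁, he₂] with z h₁ h₂
      simp [h₁, h₂]
    · intro y hy
      simp only [Pi.add_apply, hbc₁ y hy, hbc₂ y hy]
      ring
  zero_mem' := ⟨Pdom, 0, hPdom, le_refl _, Set.inter_subset_right, differentiableOn_const 0,
    by simpa using Lp.coeFn_zero ℂ 2 (volume.restrict Ω), fun y _ => by simp⟩
  smul_mem' := by
    rintro c₀ f ⟨U, g, hU, hUP, hsub, hg, he, hbc⟩
    refine ⟨U, c₀ • g, hU, hUP, hsub, hg.const_smul c₀, (Lp.coeFn_smul c₀ f).trans ?_, ?_⟩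
    · filter_upwards [he] with z h
      simp [h]
    · intro y hy
      simp only [Pi.smul_apply, hbc y hy, smul_eq_mul]
      ring


/-- The quasiperiodic Bergman space `A²_η(ϖ)`: the closure in `A²(ϖ)` of `A²_{η,ext}(ϖ)`. -/
def quasiBergman (P : PeriodicCell) (η : ℝ) : Submodule ℂ (L2 P.carrier) :=
  (quasiPre P.carrier P.domain P.isOpen_domain P.a P.b η).topologicalClosure

instance (P : PeriodicCell) (η : ℝ) : CompleteSpace (quasiBergman P η) :=
  (Submodule.isClosed_topologicalClosure _).completeSpace_coe

lemma quasiPre_le_bergmanPre (P : PeriodicCell) (η : ℝ) :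
    quasiPre P.carrier P.domain P.isOpen_domain P.a P.b η ≤ bergmanPre P.carrier := by
  rintro f ⟨U, g, hU, hUP, hsub, hg, he, hbc⟩
  exact ⟨g, hg.mono fun z hz => hsub ⟨subset_closure hz, P.cell_subset_domain hz⟩, he⟩

lemma quasiBergman_le_bergman (P : PeriodicCell) (η : ℝ) :
    quasiBergman P η ≤ Bergman P.carrier :=
  Submodule.topologicalClosure_mono (quasiPre_le_bergmanPre P η)

lemma memℒp_restrict_of_subset {a : ℂ → ℂ} {p : ENNReal} {s t : Set ℂ} (hst : s ⊆ t)
    (hs : MeasurableSet s) (ha : MemLp a p (volume.restrict t)) :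
    MemLp a p (volume.restrict s) := by
  have h := ha.restrict s
  rwa [Measure.restrict_restrict hs, Set.inter_eq_self_of_subset_left hst] at h

/-- The operator `T_{a,η} : A²_η(ϖ) → A²_η(ϖ)`, `T_{a,η} f = P_η (a|_ϖ · f)`. -/
def toeplitzFiber (P : PeriodicCell) (a : ℂ → ℂ)
    (ha : MemLp a ⊤ (volume.restrict P.domain)) (η : ℝ) :
    ↥(quasiBergman P η) →L[ℂ] ↥(quasiBergman P η) :=
  (quasiBergman P η).orthogonalProjectionOnto.comp
    ((mulOp a (memℒp_restrict_of_subset P.cell_subset_domain P.isOpen.measurableSet ha)).comp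
      (quasiBergman P η).subtypeL)

/-- The orthogonal projection `P_η : L²(ϖ) → A²_η(ϖ)`, as an operator on `L²(ϖ)`. -/
def quasiProj (P : PeriodicCell) (η : ℝ) : L2 P.carrier →L[ℂ] L2 P.carrier :=
  (quasiBergman P η).subtypeL.comp (quasiBergman P η).orthogonalProjectionOnto

/-- The operator `f ↦ P_η (a|_ϖ · f)` regarded as an operator on `A²(ϖ)`. -/
def toeplitzFiberOnBergman (P : PeriodicCell) (a : ℂ → ℂ)
    (ha : MemLp a ⊤ (volume.restrict P.domain)) (η : ℝ) :
    ↥(Bergman P.carrier) →L[ℂ] ↥(Bergman P.carrier) :=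
  ContinuousLinearMap.codRestrict
    (((quasiBergman P η).subtypeL.comp (quasiBergman P η).orthogonalProjectionOnto).comp
      ((mulOp a (memℒp_restrict_of_subset P.cell_subset_domain P.isOpen.measurableSet ha)).comp
        (Bergman P.carrier).subtypeL))
    (Bergman P.carrier)
    (fun f => quasiBergman_le_bergman P η (SetLike.coe_mem _))


/-!
Multiplication by `e^{itz}` maps `A²_η(ϖ)` into `A²_{η+t}(ϖ)`, because `e^{it(z+1)} = e^{it} e^{itz}`,
and since `ϖ` is bounded it moves every `f ∈ L²(ϖ)` by at most `O(|t|)‖f‖`. Hence each of `A²_η(ϖ)`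
and `A²_μ(ϖ)` lies within relative distance `O(|η - μ|)` of the other. For orthogonal projections
this gives `‖P_η - P_μ‖ ≤ ‖(1 - P_μ) P_η‖ + ‖(1 - P_η) P_μ‖ = O(|η - μ|)`, which is even Lipschitz;
on the bounded range `|η - μ| ≤ 2π` it implies the square-root bound. The estimate for `T_{a,η}`
follows by composing with multiplication by `a`.
-/

end BergmanToeplitz

theorem Submodule.topologicalClosure_le_comap {R M : Type*} [Semiring R] [TopologicalSpace M]
    [AddCommMonoid M] [Module R M] [ContinuousAdd M] [ContinuousConstSMul R M]
    {p q : Submodule R M} {T : M →L[R] M} (h : p ≤ q.comap T.toLinearMap) :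
    p.topologicalClosure ≤ q.topologicalClosure.comap T.toLinearMap :=
  p.topologicalClosure_minimal (h.trans (Submodule.comap_mono q.le_topologicalClosure))
    (q.isClosed_topologicalClosure.preimage T.continuous)

namespace Submodule

variable {𝕜 H : Type*} [RCLike 𝕜] [NormedAddCommGroup H] [InnerProductSpace 𝕜 H]

theorem norm_sub_starProjection_le (U : Submodule 𝕜 H) [U.HasOrthogonalProjection] (x : H)
    {y : H} (hy : y ∈ U) : ‖x - U.starProjection x‖ ≤ ‖x - y‖ := by
  rw [starProjection_minimal]
  exact ciInf_le ⟨0, Set.forall_mem_range.mpr fun _ => norm_nonneg _⟩ (⟨y, hy⟩ : U)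

variable {E F : Submodule 𝕜 H} [E.HasOrthogonalProjection] [F.HasOrthogonalProjection] {δ δ' : ℝ}

theorem norm_one_sub_starProjection_mul_le (hδ : 0 ≤ δ)
    (hEF : ∀ x ∈ E, ∃ y ∈ F, ‖x - y‖ ≤ δ * ‖x‖) :
    ‖(1 - F.starProjection) * E.starProjection‖ ≤ δ := by
  refine ContinuousLinearMap.opNorm_le_bound _ hδ fun x => ?_
  obtain ⟨y, hyF, hy⟩ := hEF _ (E.starProjection_apply_mem x)
  calc ‖E.starProjection x - F.starProjection (E.starProjection x)‖
      ≤ ‖E.starProjection x - y‖ := F.norm_sub_starProjection_le _ hyF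
    _ ≤ δ * ‖E.starProjection x‖ := hy
    _ ≤ δ * ‖x‖ := by gcongr; exact E.norm_starProjection_apply_le x

theorem norm_starProjection_sub_le [CompleteSpace H] (hδ : 0 ≤ δ) (hδ' : 0 ≤ δ')
    (hEF : ∀ x ∈ E, ∃ y ∈ F, ‖x - y‖ ≤ δ * ‖x‖) (hFE : ∀ y ∈ F, ∃ x ∈ E, ‖y - x‖ ≤ δ' * ‖y‖) :
    ‖E.starProjection - F.starProjection‖ ≤ δ + δ' := by
  have hsplit : E.starProjection - F.starProjection =
      star ((1 - F.starProjection) * E.starProjection) -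
        (1 - E.starProjection) * F.starProjection := by
    rw [star_mul, star_sub, star_one, (isSelfAdjoint_starProjection E).star_eq,
      (isSelfAdjoint_starProjection F).star_eq]
    noncomm_ring
  rw [hsplit]
  refine (norm_sub_le _ _).trans (add_le_add ?_ ?_)
  · exact (norm_star _).trans_le (norm_one_sub_starProjection_mul_le hδ hEF)
  · exact norm_one_sub_starProjection_mul_le hδ' hFE

end Submodule

lemma Complex.norm_exp_sub_one_le_norm_mul_exp (w : ℂ) : ‖exp w - 1‖ ≤ ‖w‖ * Real.exp ‖w‖ := by
  simpa using norm_exp_sub_sum_le_norm_mul_exp w 1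

lemma Complex.norm_ofReal_mul_mul_I (t : ℝ) (z : ℂ) : ‖(t : ℂ) * z * I‖ = |t| * ‖z‖ := by
  rw [norm_mul, norm_mul, norm_I, mul_one, norm_real, Real.norm_eq_abs]

lemma Real.le_sqrt_mul_sqrt_of_le {s T : ℝ} (hs : 0 ≤ s) (hsT : s ≤ T) :
    s ≤ Real.sqrt T * Real.sqrt s :=
  calc s = Real.sqrt s * Real.sqrt s := (Real.mul_self_sqrt hs).symm
    _ ≤ Real.sqrt T * Real.sqrt s := by gcongr

namespace BergmanToeplitz

lemma mulOp_coeFn {ν : Measure ℂ} (b : ℂ → ℂ) (hb : MemLp b ⊤ ν) (f : Lp ℂ 2 ν) :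
    (mulOp b hb f : ℂ → ℂ) =ᵐ[ν] b • (f : ℂ → ℂ) :=
  MemLp.coeFn_toLp ((Lp.memLp f).smul hb)

lemma norm_mulOp_sub_self_le {ν : Measure ℂ} (b : ℂ → ℂ) (hb : MemLp b ⊤ ν) {c : ℝ}
    (hbc : ∀ᵐ z ∂ν, ‖b z - 1‖ ≤ c) (f : Lp ℂ 2 ν) : ‖mulOp b hb f - f‖ ≤ c * ‖f‖ := by
  refine Lp.norm_le_mul_norm_of_ae_le_mul ?_
  filter_upwards [Lp.coeFn_sub (mulOp b hb f) f, mulOp_coeFn b hb f, hbc] with z hsub hmul hz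
  rw [hsub, Pi.sub_apply, hmul, Pi.smul_apply', smul_eq_mul, ← sub_one_mul, norm_mul]
  gcongr

namespace PeriodicCell

variable (P : PeriodicCell)

lemma norm_le_of_mem {z : ℂ} (hz : z ∈ P.carrier) : ‖z‖ ≤ 1 / 2 + P.M := by
  obtain ⟨⟨hre₁, hre₂⟩, ⟨him₁, him₂⟩⟩ := P.subset_strip hz
  have := Complex.norm_le_abs_re_add_abs_im z
  linarith [abs_le.2 ⟨hre₁.le, hre₂.le⟩, abs_le.2 ⟨him₁.le, him₂.le⟩]

lemma ae_norm_le : ∀ᵐ z ∂(volume.restrict P.carrier), ‖z‖ ≤ 1 / 2 + P.M := by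
  filter_upwards [ae_restrict_mem P.isOpen.measurableSet] with z hz
  exact P.norm_le_of_mem hz

end PeriodicCell

def phase (t : ℝ) (z : ℂ) : ℂ := exp (t * z * I)

lemma differentiable_phase (t : ℝ) : Differentiable ℂ (phase t) :=
  differentiable_exp.comp ((differentiable_id.const_mul (t : ℂ)).mul_const I)

lemma phase_add_one (t : ℝ) (z : ℂ) : phase t (z + 1) = exp (t * I) * phase t z := by
  simp only [phase, ← exp_add]
  ring_nf

lemma phase_memLp (P : PeriodicCell) (t : ℝ) :
    MemLp (phase t) ⊤ (volume.restrict P.carrier) := by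
  refine memLp_top_of_bound (differentiable_phase t).continuous.aestronglyMeasurable
    (Real.exp (|t| * (1 / 2 + P.M))) ?_
  filter_upwards [P.ae_norm_le] with z hz
  refine (norm_exp_le_exp_norm _).trans (Real.exp_le_exp.2 ?_)
  rw [norm_ofReal_mul_mul_I]
  gcongr

def phaseOp (P : PeriodicCell) (t : ℝ) : L2 P.carrier →L[ℂ] L2 P.carrier :=
  mulOp (phase t) (phase_memLp P t)

lemma quasiPre_le_comap_phaseOp (P : PeriodicCell) (η t : ℝ) :
    quasiPre P.carrier P.domain P.isOpen_domain P.a P.b η ≤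
      (quasiPre P.carrier P.domain P.isOpen_domain P.a P.b (η + t)).comap
        (phaseOp P t).toLinearMap := by
  rintro f ⟨U, g, hU, hUP, hsub, hg, hfg, hbc⟩
  refine ⟨U, phase t * g, hU, hUP, hsub, (differentiable_phase t).differentiableOn.mul hg,
    ?_, fun y hy => ?_⟩
  · filter_upwards [mulOp_coeFn (phase t) (phase_memLp P t) f, hfg] with z hz hfz
    exact hz.trans (by rw [Pi.smul_apply', hfz]; rfl)
  · have hshift : (1 / 2 + y * I : ℂ) = -(1 / 2) + y * I + 1 := by ring
    rw [Pi.mul_apply, Pi.mul_apply, hbc y hy, hshift, phase_add_one]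
    push_cast
    rw [add_mul, exp_add]
    ring

lemma phaseOp_mem_quasiBergman {P : PeriodicCell} {η : ℝ} (t : ℝ) {f : L2 P.carrier}
    (hf : f ∈ quasiBergman P η) : phaseOp P t f ∈ quasiBergman P (η + t) :=
  Submodule.topologicalClosure_le_comap (quasiPre_le_comap_phaseOp P η t) hf

lemma norm_phaseOp_sub_self_le (P : PeriodicCell) {t T : ℝ} (ht : |t| ≤ T) (f : L2 P.carrier) :
    ‖phaseOp P t f - f‖ ≤ (1 / 2 + P.M) * Real.exp (T * (1 / 2 + P.M)) * |t| * ‖f‖ := by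
  refine norm_mulOp_sub_self_le _ _ ?_ f
  filter_upwards [P.ae_norm_le] with z hz
  have hT : 0 ≤ T := (abs_nonneg t).trans ht
  have hR : 0 ≤ 1 / 2 + P.M := by linarith [P.M_pos]
  calc ‖phase t z - 1‖ ≤ |t| * ‖z‖ * Real.exp (|t| * ‖z‖) := by
        rw [← norm_ofReal_mul_mul_I]
        exact norm_exp_sub_one_le_norm_mul_exp _
    _ ≤ |t| * (1 / 2 + P.M) * Real.exp (T * (1 / 2 + P.M)) := by gcongr
    _ = (1 / 2 + P.M) * Real.exp (T * (1 / 2 + P.M)) * |t| := by ring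

lemma exists_near_mem_quasiBergman (P : PeriodicCell) {η μ T : ℝ} (hημ : |η - μ| ≤ T)
    {f : L2 P.carrier} (hf : f ∈ quasiBergman P η) :
    ∃ g ∈ quasiBergman P μ,
      ‖f - g‖ ≤ (1 / 2 + P.M) * Real.exp (T * (1 / 2 + P.M)) * |η - μ| * ‖f‖ := by
  refine ⟨phaseOp P (μ - η) f, by simpa using phaseOp_mem_quasiBergman (μ - η) hf, ?_⟩
  rw [norm_sub_rev, abs_sub_comm]
  exact norm_phaseOp_sub_self_le P (by rwa [abs_sub_comm]) f

lemma norm_quasiProj_sub_le (P : PeriodicCell) {η μ T : ℝ} (hημ : |η - μ| ≤ T) :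
    ‖quasiProj P η - quasiProj P μ‖ ≤
      2 * ((1 / 2 + P.M) * Real.exp (T * (1 / 2 + P.M))) * |η - μ| := by
  have hM := P.M_pos
  have hμη : |μ - η| ≤ T := by rwa [abs_sub_comm]
  have key := Submodule.norm_starProjection_sub_le (by positivity) (by positivity)
    (fun f hf => exists_near_mem_quasiBergman P hημ hf)
    (fun f hf => exists_near_mem_quasiBergman P hμη hf)
  rw [abs_sub_comm μ η] at key
  exact key.trans_eq (by ring)

lemma norm_toeplitzFiberOnBergman_sub_le (P : PeriodicCell) (a : ℂ → ℂ)
    (ha : MemLp a ⊤ (volume.restrict P.domain)) (η μ : ℝ) :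
    ‖toeplitzFiberOnBergman P a ha η - toeplitzFiberOnBergman P a ha μ‖ ≤
      ‖quasiProj P η - quasiProj P μ‖ *
        ‖mulOp a (memℒp_restrict_of_subset P.cell_subset_domain P.isOpen.measurableSet ha)‖ := by
  set A := mulOp a (memℒp_restrict_of_subset P.cell_subset_domain P.isOpen.measurableSet ha)
  refine ContinuousLinearMap.opNorm_le_bound _ (by positivity) fun f => ?_
  calc ‖(quasiProj P η - quasiProj P μ) (A f)‖
      ≤ ‖quasiProj P η - quasiProj P μ‖ * ‖A f‖ := ContinuousLinearMap.le_opNorm _ _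
    _ ≤ ‖quasiProj P η - quasiProj P μ‖ * (‖A‖ * ‖f‖) := by gcongr; exact A.le_opNorm _
    _ = ‖quasiProj P η - quasiProj P μ‖ * ‖A‖ * ‖f‖ := by ring

theorem projection_holder_continuity_general (P : PeriodicCell) (a : ℂ → ℂ)
    (ha : MemLp a ⊤ (volume.restrict P.domain)) :
    ∃ C C' : ℝ, 0 < C ∧ 0 < C' ∧
      ∀ η ∈ Set.Icc (-Real.pi) Real.pi, ∀ μ ∈ Set.Icc (-Real.pi) Real.pi,
        ‖quasiProj P η - quasiProj P μ‖ ≤ C * Real.sqrt |η - μ| ∧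
        ‖toeplitzFiberOnBergman P a ha η - toeplitzFiberOnBergman P a ha μ‖ ≤
          C' * Real.sqrt |η - μ| := by
  set K := 2 * ((1 / 2 + P.M) * Real.exp (2 * Real.pi * (1 / 2 + P.M)))
  set A := ‖mulOp a (memℒp_restrict_of_subset P.cell_subset_domain P.isOpen.measurableSet ha)‖
  have hK : 0 < K := by have := P.M_pos; positivity
  set C := K * Real.sqrt (2 * Real.pi)
  refine ⟨C, C * (A + 1), by positivity, by positivity, fun η hη μ hμ => ?_⟩
  have hημ : |η - μ| ≤ 2 * Real.pi :=
    abs_sub_le_iff.2 ⟨by linarith [hη.2, hμ.1], by linarith [hη.1, hμ.2]⟩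
  have hP : ‖quasiProj P η - quasiProj P μ‖ ≤ C * Real.sqrt |η - μ| :=
    calc ‖quasiProj P η - quasiProj P μ‖ ≤ K * |η - μ| := norm_quasiProj_sub_le P hημ
      _ ≤ K * (Real.sqrt (2 * Real.pi) * Real.sqrt |η - μ|) := by
          gcongr; exact Real.le_sqrt_mul_sqrt_of_le (abs_nonneg _) hημ
      _ = C * Real.sqrt |η - μ| := by ring
  refine ⟨hP, ?_⟩
  calc ‖toeplitzFiberOnBergman P a ha η - toeplitzFiberOnBergman P a ha μ‖
      ≤ ‖quasiProj P η - quasiProj P μ‖ * A := norm_toeplitzFiberOnBergman_sub_le P a ha η μ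
    _ ≤ C * Real.sqrt |η - μ| * A := by gcongr
    _ ≤ C * Real.sqrt |η - μ| * A + C * Real.sqrt |η - μ| :=
        le_add_of_nonneg_right (by positivity)
    _ = C * (A + 1) * Real.sqrt |η - μ| := by ring

/-- **Lemma (Hölder continuity of the projections `P_η` and of `T_{a,η}`).**
There are `C, C' > 0` such that for all `η, μ ∈ [-π,π]`,
`‖P_η - P_μ‖_{L²(ϖ)→L²(ϖ)} ≤ C|η-μ|^{1/2}` and, regarding `f ↦ P_η(a|_ϖ f)` as an operator
on `A²(ϖ)`, `‖T_{a,η} - T_{a,μ}‖_{A²(ϖ)→A²(ϖ)} ≤ C'|η-μ|^{1/2}`. -/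
theorem projection_holder_continuity (P : PeriodicCell) (a : ℂ → ℂ)
    (ha : MemLp a ⊤ (volume.restrict P.domain)) (hper : PeriodicSymbol P a) :
    ∃ C C' : ℝ, 0 < C ∧ 0 < C' ∧
      ∀ η ∈ Set.Icc (-Real.pi) Real.pi, ∀ μ ∈ Set.Icc (-Real.pi) Real.pi,
        ‖quasiProj P η - quasiProj P μ‖ ≤ C * Real.sqrt |η - μ| ∧
        ‖toeplitzFiberOnBergman P a ha η - toeplitzFiberOnBergman P a ha μ‖ ≤
          C' * Real.sqrt |η - μ| :=
  projection_holder_continuity_general P a ha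

end BergmanToeplitz
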